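/- (Lemma 1, necessity.) If a strategy profile Q with all Q_i > 0 is a Nash equilibrium of the demand-declaration game, then Q satisfies both C1 (Σ_i Q_i = Q_tot) and C2 (h_i(Q) = h_j(Q) for all i, j). -/

import Mathlib

/-!
At a welfare-optimal allocation, a user served below its demand forces the quota to be
exhausted, and moving a little quota from a served user `b` to an underserved user `a` must not
raise welfare; letting the amount moved tend to `0` gives the marginal condition
`ψ a (c b P b + Ψ q b) ≤ ψ b (c a P a + Ψ q a)`.

A user's utility is at most `log (1 + Ψ / c i)`, with equality exactly when it is fully served.
At an equilibrium every user is fully served: otherwise a tiny declaration would be fully served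
by the marginal condition. If `∑ Q < Q_tot`, a user could raise its declaration to use up the
slack and still be fully served, gaining quota at equal utility. Finally, a user `i` raising its
declaration by `ε` must then be underserved, so quota `< ε` was taken from `j`; the marginal
condition between `i` and `j` as `ε → 0` gives `ψ i (c j + Ψ) Q j ≤ ψ j (c i + Ψ) Q i`, which is
one half of C2.
-/

open Filter Topology Function Finset

lemma le_of_eventually_le_add_mul {a b k : ℝ} (h : ∀ᶠ t in 𝓝[>] 0, a ≤ b + k * t) : a ≤ b := by
  have hlim : Tendsto (fun t => b + k * t) (𝓝[>] 0) (𝓝 b) :=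
    ((continuous_const.add (continuous_const.mul continuous_id)).tendsto' 0 b (by simp)).mono_left
      nhdsWithin_le_nhds
  exact ge_of_tendsto hlim h

lemma eventually_mul_lt_nhdsGT {k u : ℝ} (hu : 0 < u) : ∀ᶠ t in 𝓝[>] 0, k * t < u :=
  (((continuous_const.mul continuous_id).tendsto' 0 0 (by simp)).mono_left
    nhdsWithin_le_nhds).eventually_lt_const hu

namespace Real

lemma div_le_log_sub_log {u v : ℝ} (hu : 0 < u) (huv : u ≤ v) : (v - u) / v ≤ log v - log u := by
  have hv : 0 < v := hu.trans_le huv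
  have h := one_sub_inv_le_log_of_pos (div_pos hv hu)
  rwa [log_div hv.ne' hu.ne', inv_div, one_sub_div hv.ne'] at h

lemma log_sub_log_le_div {u v : ℝ} (hu : 0 < u) (huv : u ≤ v) : log v - log u ≤ (v - u) / u := by
  have hv : 0 < v := hu.trans_le huv
  have h := log_le_sub_one_of_pos (div_pos hv hu)
  rwa [log_div hv.ne' hu.ne', div_sub_one hu.ne'] at h

lemma div_le_log_one_add_div_sub {Ψ κ x y : ℝ} (hΨ : 0 ≤ Ψ) (hκ : 0 < κ) (hx : 0 ≤ x)
    (hxy : x ≤ y) : Ψ * (y - x) / (κ + Ψ * y) ≤ log (1 + Ψ * y / κ) - log (1 + Ψ * x / κ) := by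
  have h := div_le_log_sub_log (u := 1 + Ψ * x / κ) (v := 1 + Ψ * y / κ) (by positivity) (by gcongr)
  convert h using 1
  field_simp
  ring

lemma log_one_add_div_sub_le_div {Ψ κ x y : ℝ} (hΨ : 0 ≤ Ψ) (hκ : 0 < κ) (hx : 0 ≤ x)
    (hxy : x ≤ y) : log (1 + Ψ * y / κ) - log (1 + Ψ * x / κ) ≤ Ψ * (y - x) / (κ + Ψ * x) := by
  have h := log_sub_log_le_div (u := 1 + Ψ * x / κ) (v := 1 + Ψ * y / κ) (by positivity) (by gcongr)
  convert h using 1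
  field_simp
  ring

lemma log_one_add_div_lt {Ψ c p q : ℝ} (hΨ : 0 < Ψ) (hc : 0 < c) (hq : 0 ≤ q) (hqp : q < p) :
    log (1 + Ψ * q / (c * p)) < log (1 + Ψ / c) := by
  have hp : 0 < p := hq.trans_lt hqp
  rw [← mul_div_mul_right Ψ c hp.ne']
  gcongr

end Real

section Allocation

variable {ι : Type*} [Fintype ι]

lemma Fintype.sum_sub_sum_of_eq_off {M : Type*} [AddCommGroup M] {x y : ι → M} (a : ι)
    (h : ∀ k ≠ a, x k = y k) : ∑ k, x k - ∑ k, y k = x a - y a := by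
  rw [← sum_sub_distrib]
  exact Fintype.sum_eq_single a fun k hk => by rw [h k hk, sub_self]

lemma Fintype.sum_sub_sum_of_eq_off₂ {M : Type*} [AddCommGroup M] {x y : ι → M} {a b : ι}
    (hab : a ≠ b) (h : ∀ k, k ≠ a → k ≠ b → x k = y k) :
    ∑ k, x k - ∑ k, y k = (x a - y a) + (x b - y b) := by
  rw [← sum_sub_distrib]
  exact Fintype.sum_eq_add a b hab fun k hk => by rw [h k hk.1 hk.2, sub_self]

lemma sub_le_sub_of_sum_eq {x y : ι → ℝ} (hsum : ∑ k, x k = ∑ k, y k) {i j : ι} (hji : j ≠ i)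
    (hle : ∀ k ≠ i, x k ≤ y k) : y j - x j ≤ x i - y i := by
  classical
  have hsplit := Fintype.sum_eq_add_sum_compl i fun k => y k - x k
  rw [sum_sub_distrib, hsum, sub_self] at hsplit
  have hj := single_le_sum (f := fun k => y k - x k) (s := {i}ᶜ)
    (fun k hk => sub_nonneg.2 (hle k (by simpa using hk))) (a := j) (by simpa using hji)
  linarith

def feasibleSet (Qtot : ℝ) (P : ι → ℝ) : Set (ι → ℝ) :=
  {q | (∀ i, 0 ≤ q i ∧ q i ≤ P i) ∧ ∑ i, q i ≤ Qtot}

noncomputable def welfare (ψ c : ι → ℝ) (Ψ : ℝ) (P q : ι → ℝ) : ℝ :=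
  ∑ i, ψ i * Real.log (1 + Ψ * q i / (c i * P i))

def IsOptimalAllocation (ψ c : ι → ℝ) (Ψ Qtot : ℝ) (P q : ι → ℝ) : Prop :=
  q ∈ feasibleSet Qtot P ∧ IsMaxOn (welfare ψ c Ψ P) (feasibleSet Qtot P) q

variable {ψ c : ι → ℝ} {Ψ Qtot : ℝ} {P q q' : ι → ℝ}

lemma welfare_sub_welfare_of_eq_off (a : ι) (h : ∀ k ≠ a, q' k = q k) :
    welfare ψ c Ψ P q' - welfare ψ c Ψ P q =
      ψ a * (Real.log (1 + Ψ * q' a / (c a * P a)) - Real.log (1 + Ψ * q a / (c a * P a))) := by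
  rw [welfare, welfare, Fintype.sum_sub_sum_of_eq_off a fun k hk => by rw [h k hk], mul_sub]

lemma welfare_sub_welfare_of_eq_off₂ {a b : ι} (hab : a ≠ b)
    (h : ∀ k, k ≠ a → k ≠ b → q' k = q k) :
    welfare ψ c Ψ P q' - welfare ψ c Ψ P q =
      ψ a * (Real.log (1 + Ψ * q' a / (c a * P a)) - Real.log (1 + Ψ * q a / (c a * P a))) +
      ψ b * (Real.log (1 + Ψ * q' b / (c b * P b)) - Real.log (1 + Ψ * q b / (c b * P b))) := by
  rw [welfare, welfare, Fintype.sum_sub_sum_of_eq_off₂ hab fun k hka hkb => by rw [h k hka hkb],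
    mul_sub, mul_sub]

namespace IsOptimalAllocation

lemma sum_eq_of_lt (hq : IsOptimalAllocation ψ c Ψ Qtot P q) (hψ : ∀ i, 0 < ψ i)
    (hc : ∀ i, 0 < c i) (hΨ : 0 < Ψ) (hP : ∀ i, 0 < P i) {a : ι} (ha : q a < P a) :
    ∑ k, q k = Qtot := by
  classical
  obtain ⟨⟨hbox, hsum⟩, hmax⟩ := hq
  by_contra hne
  set δ := min (P a - q a) (Qtot - ∑ k, q k)
  have hδ : 0 < δ := lt_min (sub_pos.2 ha) (sub_pos.2 (hsum.lt_of_ne hne))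
  set q' := update q a (q a + δ)
  have hoff : ∀ k ≠ a, q' k = q k := fun k hk => update_of_ne hk _ _
  have hq'a : q' a = q a + δ := update_self ..
  have hmem : q' ∈ feasibleSet Qtot P := by
    refine ⟨fun k => ?_, ?_⟩
    · rcases eq_or_ne k a with rfl | hk
      · rw [hq'a]
        constructor <;> linarith [min_le_left (P k - q k) (Qtot - ∑ k, q k), (hbox k).1]
      · rw [hoff k hk]
        exact hbox k
    · have := Fintype.sum_sub_sum_of_eq_off a hoff
      linarith [min_le_right (P a - q a) (Qtot - ∑ k, q k)]
  have hgain : 0 < welfare ψ c Ψ P q' - welfare ψ c Ψ P q := by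
    rw [welfare_sub_welfare_of_eq_off a hoff, hq'a]
    refine mul_pos (hψ a) (lt_of_lt_of_le ?_ (Real.div_le_log_one_add_div_sub hΨ.le
      (mul_pos (hc a) (hP a)) (hbox a).1 (le_add_of_nonneg_right hδ.le)))
    have := (hbox a).1
    have := mul_pos (hc a) (hP a)
    rw [add_sub_cancel_left]
    positivity
  linarith [isMaxOn_iff.1 hmax q' hmem]

lemma mul_le_mul_of_lt_of_pos (hq : IsOptimalAllocation ψ c Ψ Qtot P q) (hψ : ∀ i, 0 < ψ i)
    (hc : ∀ i, 0 < c i) (hΨ : 0 < Ψ) (hP : ∀ i, 0 < P i) {a b : ι} (hab : a ≠ b)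
    (ha : q a < P a) (hb : 0 < q b) :
    ψ a * (c b * P b + Ψ * q b) ≤ ψ b * (c a * P a + Ψ * q a) := by
  classical
  obtain ⟨⟨hbox, hsum⟩, hmax⟩ := hq
  refine le_of_eventually_le_add_mul (k := (ψ a + ψ b) * Ψ) ?_
  filter_upwards [Ioo_mem_nhdsGT (lt_min (sub_pos.2 ha) hb)] with t ⟨ht0, ht⟩
  have hta : t < P a - q a := ht.trans_le (min_le_left _ _)
  have htb : t < q b := ht.trans_le (min_le_right _ _)
  set q' := update (update q a (q a + t)) b (q b - t)
  have hq'a : q' a = q a + t := by simp [q', hab]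
  have hq'b : q' b = q b - t := by simp [q']
  have hoff : ∀ k, k ≠ a → k ≠ b → q' k = q k := by
    intro k hka hkb
    simp [q', hka, hkb]
  have hmem : q' ∈ feasibleSet Qtot P := by
    refine ⟨fun k => ?_, ?_⟩
    · rcases eq_or_ne k a with rfl | hka
      · rw [hq'a]
        constructor <;> linarith [(hbox k).1]
      rcases eq_or_ne k b with rfl | hkb
      · rw [hq'b]
        constructor <;> linarith [(hbox k).2]
      rw [hoff k hka hkb]
      exact hbox k
    · have := Fintype.sum_sub_sum_of_eq_off₂ hab hoff
      rw [hq'a, hq'b] at this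
      linarith
  have hκa := mul_pos (hc a) (hP a)
  have hκb := mul_pos (hc b) (hP b)
  have hgain := Real.div_le_log_one_add_div_sub hΨ.le hκa (hbox a).1
    (le_add_of_nonneg_right ht0.le)
  have hloss := Real.log_one_add_div_sub_le_div hΨ.le hκb (sub_nonneg.2 htb.le)
    (sub_le_self _ ht0.le)
  have hdiff := welfare_sub_welfare_of_eq_off₂ (ψ := ψ) (c := c) (Ψ := Ψ) (P := P) hab hoff
  rw [hq'a, hq'b] at hdiff
  have hle := isMaxOn_iff.1 hmax q' hmem
  have hA : 0 < c a * P a + Ψ * (q a + t) := by have := (hbox a).1; positivity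
  have hB : 0 < c b * P b + Ψ * (q b - t) := by
    have := sub_pos.2 htb
    positivity
  rw [add_sub_cancel_left] at hgain
  rw [sub_sub_cancel] at hloss
  have hcross : ψ a * (Ψ * t / (c a * P a + Ψ * (q a + t))) ≤
      ψ b * (Ψ * t / (c b * P b + Ψ * (q b - t))) := by
    linarith [mul_le_mul_of_nonneg_left hgain (hψ a).le,
      mul_le_mul_of_nonneg_left hloss (hψ b).le]
  rw [← mul_div_assoc, ← mul_div_assoc, div_le_div_iff₀ hA hB] at hcross
  have : ψ a * (c b * P b + Ψ * (q b - t)) ≤ ψ b * (c a * P a + Ψ * (q a + t)) :=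
    le_of_mul_le_mul_left (by linarith) (mul_pos hΨ ht0)
  linarith

lemma eq_of_sum_le (hq : IsOptimalAllocation ψ c Ψ Qtot P q) (hψ : ∀ i, 0 < ψ i)
    (hc : ∀ i, 0 < c i) (hΨ : 0 < Ψ) (hP : ∀ i, 0 < P i) (hPsum : ∑ i, P i ≤ Qtot) : q = P := by
  funext a
  by_contra hne
  have ha : q a < P a := lt_of_le_of_ne (hq.1.1 a).2 hne
  have hlt : ∑ k, q k < ∑ k, P k :=
    sum_lt_sum (fun k _ => (hq.1.1 k).2) ⟨a, mem_univ a, ha⟩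
  linarith [hq.sum_eq_of_lt hψ hc hΨ hP ha]

lemma apply_eq_of_lt (hq : IsOptimalAllocation ψ c Ψ Qtot P q) (hψ : ∀ i, 0 < ψ i)
    (hc : ∀ i, 0 < c i) (hΨ : 0 < Ψ) (hP : ∀ i, 0 < P i) {i : ι} (hi : P i < Qtot)
    (hsmall : ∀ b ≠ i, ψ b * ((c i + Ψ) * P i) < ψ i * (c b * P b)) : q i = P i := by
  by_contra hne
  have hlt : q i < P i := lt_of_le_of_ne (hq.1.1 i).2 hne
  obtain ⟨b, hbi, hb⟩ : ∃ b ≠ i, 0 < q b := by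
    by_contra! hzero
    have : ∑ k, q k = q i :=
      Fintype.sum_eq_single i fun b hb => le_antisymm (hzero b hb) (hq.1.1 b).1
    linarith [hq.sum_eq_of_lt hψ hc hΨ hP hlt]
  have hex := hq.mul_le_mul_of_lt_of_pos hψ hc hΨ hP (Ne.symm hbi) hlt hb
  have h1 := mul_le_mul_of_nonneg_left (mul_le_mul_of_nonneg_left hlt.le hΨ.le) (hψ b).le
  have h2 := mul_pos (hψ i) (mul_pos hΨ hb)
  linarith [hsmall b hbi]

end IsOptimalAllocation

end Allocation

lemma update_pos {ι : Type*} [DecidableEq ι] {Q : ι → ℝ} (hQ : ∀ k, 0 < Q k) {i : ι} {x : ℝ}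
    (hx : 0 < x) : ∀ k, 0 < update Q i x k :=
  (forall_update_iff Q fun _ y => 0 < y).2 ⟨hx, fun k _ => hQ k⟩

section Game

variable {ι : Type*} [Fintype ι] [DecidableEq ι]

def IsWelfareMaximizing (ψ c : ι → ℝ) (Ψ Qtot : ℝ) (alloc : (ι → ℝ) → ι → ℝ) : Prop :=
  ∀ P : ι → ℝ, (∀ i, 0 < P i) → IsOptimalAllocation ψ c Ψ Qtot P (alloc P)

def IsNashEquilibrium (c : ι → ℝ) (Ψ : ℝ) (alloc : (ι → ℝ) → ι → ℝ) (Q : ι → ℝ) : Prop :=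
  ∀ i x, 0 < x →
    ¬ (Real.log (1 + Ψ * alloc (update Q i x) i / (c i * x)) >
          Real.log (1 + Ψ * alloc Q i / (c i * Q i)) ∨
        (Real.log (1 + Ψ * alloc (update Q i x) i / (c i * x)) =
            Real.log (1 + Ψ * alloc Q i / (c i * Q i)) ∧
          alloc (update Q i x) i > alloc Q i))

namespace IsNashEquilibrium

variable {ψ c : ι → ℝ} {Ψ Qtot : ℝ} {alloc : (ι → ℝ) → ι → ℝ} {Q : ι → ℝ}

lemma alloc_eq_self (hNE : IsNashEquilibrium c Ψ alloc Q)
    (halloc : IsWelfareMaximizing ψ c Ψ Qtot alloc) (hψ : ∀ i, 0 < ψ i) (hc : ∀ i, 0 < c i)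
    (hΨ : 0 < Ψ) (hQtot : 0 < Qtot) (hQ : ∀ i, 0 < Q i) : alloc Q = Q := by
  funext i
  by_contra hne
  have hlt : alloc Q i < Q i := lt_of_le_of_ne ((halloc Q hQ).1.1 i).2 hne
  have hsmall : ∀ᶠ x in 𝓝[>] 0, ∀ b, ψ b * (c i + Ψ) * x < ψ i * (c b * Q b) :=
    eventually_all.2 fun b => eventually_mul_lt_nhdsGT
      (by have := hψ i; have := hc b; have := hQ b; positivity)
  obtain ⟨x, ⟨hx0, hxQ⟩, hsmall⟩ := (Eventually.and (Ioo_mem_nhdsGT hQtot) hsmall).exists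
  have hP := update_pos hQ (i := i) hx0
  have hfull : alloc (update Q i x) i = x := by
    have := (halloc _ hP).apply_eq_of_lt hψ hc hΨ hP (i := i) (by rwa [update_self])
      fun b hb => by rw [update_self, update_of_ne hb, ← mul_assoc]; exact hsmall b
    rwa [update_self] at this
  refine hNE i x hx0 (Or.inl ?_)
  rw [hfull, mul_div_mul_right _ _ hx0.ne']
  exact Real.log_one_add_div_lt hΨ (hc i) ((halloc Q hQ).1.1 i).1 hlt

lemma alloc_update_lt (hNE : IsNashEquilibrium c Ψ alloc Q)
    (halloc : IsWelfareMaximizing ψ c Ψ Qtot alloc) (hQ : ∀ i, 0 < Q i) {i : ι}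
    (hi : alloc Q i = Q i) {x : ℝ} (hx : Q i < x) : alloc (update Q i x) i < x := by
  have hx0 : 0 < x := (hQ i).trans hx
  have hle := ((halloc _ (update_pos hQ (i := i) hx0)).1.1 i).2
  rw [update_self] at hle
  refine lt_of_le_of_ne hle fun heq => hNE i x hx0 (Or.inr ⟨?_, ?_⟩)
  · rw [heq, hi, mul_div_mul_right _ _ hx0.ne', mul_div_mul_right _ _ (hQ i).ne']
  · rwa [heq, hi]

lemma sum_eq [Nonempty ι] (hNE : IsNashEquilibrium c Ψ alloc Q)
    (halloc : IsWelfareMaximizing ψ c Ψ Qtot alloc) (hψ : ∀ i, 0 < ψ i) (hc : ∀ i, 0 < c i)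
    (hΨ : 0 < Ψ) (hQtot : 0 < Qtot) (hQ : ∀ i, 0 < Q i) : ∑ i, Q i = Qtot := by
  have hself := hNE.alloc_eq_self halloc hψ hc hΨ hQtot hQ
  have hle : ∑ i, Q i ≤ Qtot := by simpa only [hself] using (halloc Q hQ).1.2
  by_contra hne
  let i := Classical.arbitrary ι
  set x := Q i + (Qtot - ∑ k, Q k)
  have hx : Q i < x := by have := hle.lt_of_ne hne; linarith
  have hP := update_pos hQ (i := i) ((hQ i).trans hx)
  have hPsum : ∑ k, update Q i x k = Qtot := by
    have := Fintype.sum_sub_sum_of_eq_off i fun k (hk : k ≠ i) => update_of_ne hk x Q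
    rw [update_self] at this
    linarith
  have hlt := hNE.alloc_update_lt halloc hQ (congrFun hself i) hx
  rw [(halloc _ hP).eq_of_sum_le hψ hc hΨ hP hPsum.le, update_self] at hlt
  exact lt_irrefl x hlt

lemma mul_le_mul_of_sum_eq (hNE : IsNashEquilibrium c Ψ alloc Q)
    (halloc : IsWelfareMaximizing ψ c Ψ Qtot alloc) (hψ : ∀ i, 0 < ψ i) (hc : ∀ i, 0 < c i)
    (hΨ : 0 < Ψ) (hQtot : 0 < Qtot) (hQ : ∀ i, 0 < Q i) (hsum : ∑ i, Q i = Qtot) (i j : ι) :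
    ψ i * ((c j + Ψ) * Q j) ≤ ψ j * ((c i + Ψ) * Q i) := by
  rcases eq_or_ne i j with rfl | hij
  · exact le_rfl
  have hself := hNE.alloc_eq_self halloc hψ hc hΨ hQtot hQ
  refine le_of_eventually_le_add_mul (k := ψ i * Ψ + ψ j * (c i + Ψ)) ?_
  filter_upwards [Ioo_mem_nhdsGT (hQ j)] with ε ⟨hε0, hεj⟩
  have hP := update_pos hQ (i := i) (add_pos (hQ i) hε0)
  set q := alloc (update Q i (Q i + ε))
  have hqi : q i < Q i + ε :=
    hNE.alloc_update_lt halloc hQ (congrFun hself i) (lt_add_of_pos_right _ hε0)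
  have hqi' : q i < update Q i (Q i + ε) i := by rwa [update_self]
  have hbox := (halloc _ hP).1.1
  have hsumq := (halloc _ hP).sum_eq_of_lt hψ hc hΨ hP hqi'
  have hqj : Q j - q j ≤ q i - Q i := sub_le_sub_of_sum_eq (hsumq.trans hsum.symm) hij.symm
    fun k hk => by simpa only [update_of_ne hk] using (hbox k).2
  have hex := (halloc _ hP).mul_le_mul_of_lt_of_pos hψ hc hΨ hP hij hqi' (by linarith)
  rw [update_self, update_of_ne hij.symm] at hex
  have h1 := mul_le_mul_of_nonneg_left (show Q j - ε ≤ q j by linarith) (mul_pos (hψ i) hΨ).le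
  have h2 := mul_le_mul_of_nonneg_left hqi.le (mul_pos (hψ j) hΨ).le
  linarith

end IsNashEquilibrium

end Game

/-- Lemma 1, necessity: if a strategy profile Q of positive declared
demands is a Nash equilibrium of the demand-declaration game (no user i has a
unilateral deviation Q' > 0 yielding a strictly preferred outcome: higher utility,
or equal utility and strictly larger granted quota), then Q satisfies both
C1 (Σ_i Q_i = Q_tot) and C2 (h_i(Q) = h_j(Q) for all i,j, where
h_i(Q) = Q_i(Ψ+c_i)/(Ψψ_i)). Here `qalloc` assigns to each positive profile the
(unique) maximizer of the social welfare S over the feasible set of that profile. -/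
theorem stmt_15 (N : ℕ) (hN : 1 ≤ N) (ψ c : Fin N → ℝ)
    (hψ : ∀ i, 0 < ψ i) (hc : ∀ i, 0 < c i)
    (Ψ Qtot : ℝ) (hΨ : 0 < Ψ) (hQtot : 0 < Qtot)
    (qalloc : (Fin N → ℝ) → Fin N → ℝ)
    (hqalloc : ∀ P : Fin N → ℝ, (∀ i, 0 < P i) →
      ((∀ i, 0 ≤ qalloc P i ∧ qalloc P i ≤ P i) ∧ ∑ i, qalloc P i ≤ Qtot) ∧
      ∀ q' : Fin N → ℝ, ((∀ i, 0 ≤ q' i ∧ q' i ≤ P i) ∧ ∑ i, q' i ≤ Qtot) →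
        ∑ i, ψ i * Real.log (1 + Ψ * q' i / (c i * P i)) ≤
          ∑ i, ψ i * Real.log (1 + Ψ * qalloc P i / (c i * P i)))
    (Q : Fin N → ℝ) (hQpos : ∀ i, 0 < Q i)
    (hNE : ∀ i : Fin N, ∀ Q' : ℝ, 0 < Q' →
      ¬ (Real.log (1 + Ψ * qalloc (Function.update Q i Q') i / (c i * Q')) >
           Real.log (1 + Ψ * qalloc Q i / (c i * Q i)) ∨
         (Real.log (1 + Ψ * qalloc (Function.update Q i Q') i / (c i * Q')) =
            Real.log (1 + Ψ * qalloc Q i / (c i * Q i)) ∧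
          qalloc (Function.update Q i Q') i > qalloc Q i))) :
    (∑ i, Q i = Qtot) ∧
    (∀ i j : Fin N, Q i * (Ψ + c i) / (Ψ * ψ i) = Q j * (Ψ + c j) / (Ψ * ψ j)) := by
  have : Nonempty (Fin N) := ⟨⟨0, hN⟩⟩
  have halloc : IsWelfareMaximizing ψ c Ψ Qtot qalloc := fun P hP =>
    ⟨(hqalloc P hP).1, isMaxOn_iff.2 (hqalloc P hP).2⟩
  have hNash : IsNashEquilibrium c Ψ qalloc Q := hNE
  have hC1 := hNash.sum_eq halloc hψ hc hΨ hQtot hQpos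
  refine ⟨hC1, fun i j => ?_⟩
  have hC2 := le_antisymm (hNash.mul_le_mul_of_sum_eq halloc hψ hc hΨ hQtot hQpos hC1 i j)
    (hNash.mul_le_mul_of_sum_eq halloc hψ hc hΨ hQtot hQpos hC1 j i)
  rw [div_eq_div_iff (mul_pos hΨ (hψ i)).ne' (mul_pos hΨ (hψ j)).ne']
  linear_combination (-Ψ) * hC2
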